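/- For M(z) = (1/24)*sqrt((18-z)*(2-z)^3) - 1/2 + z/2 - z^2/24, the function z ↦ z^3 * d²/dz² (M(z)/z) is asymptotically equivalent to (1/2) * (2-z)^(-1/2) as z → 2 from below. -/

import Mathlib

open Filter

noncomputable def Fq (w : ℝ) : ℝ :=
  ((1/24) * Real.sqrt ((18-w)*(2-w)^3) - 1/2 + w/2 - w^2/24) / w

noncomputable def sQ (z : ℝ) : ℝ := Real.sqrt ((18-z)*(2-z)^3)

noncomputable def N1 (z : ℝ) : ℝ :=
  (1/24) * ((-4*(2-z)^2*(14-z)) / (2 * sQ z)) + 1/2 - z/12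

noncomputable def Nf (z : ℝ) : ℝ := (1/24) * sQ z - 1/2 + z/2 - z^2/24

noncomputable def F1 (z : ℝ) : ℝ := (N1 z * z - Nf z) / z^2

noncomputable def N2 (z : ℝ) : ℝ :=
  (1/24) * (((12*(2-z)*(10-z)) * (2 * sQ z)
    - (-4*(2-z)^2*(14-z)) * (2 * ((-4*(2-z)^2*(14-z)) / (2 * sQ z)))) / (2 * sQ z)^2) - 1/12

noncomputable def F2 (z : ℝ) : ℝ :=
  ((N2 z * z + N1 z - N1 z) * z^2 - (N1 z * z - Nf z) * (2*z)) / (z^2)^2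

noncomputable def G (z : ℝ) : ℝ :=
  z^2 * (6*(10-z)*(18-z) - 4*(14-z)^2) / (12 * Real.sqrt (18-z) ^ 3)
  + z*(2-z)*(14-z)/(3*Real.sqrt (18-z)) + (2-z)^2*Real.sqrt (18-z)/6
  - 2*Real.sqrt (2-z)

lemma Ppos {z : ℝ} (hz : z ∈ Set.Ioo (1:ℝ) 2) : 0 < (18-z)*(2-z)^3 := by
  obtain ⟨h1, h2⟩ := hz
  have h : (0:ℝ) < 2 - z := by linarith
  exact mul_pos (by linarith) (pow_pos h 3)

lemma hP (z : ℝ) : HasDerivAt (fun w : ℝ => (18-w)*(2-w)^3) (-4*(2-z)^2*(14-z)) z := by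
  have h1 : HasDerivAt (fun w:ℝ => (18-w)) (-1) z := by
    simpa using (hasDerivAt_id z).const_sub 18
  have h2 : HasDerivAt (fun w:ℝ => (2-w)^3) ((3:ℕ) * (2-z)^2 * (-1)) z := by
    simpa using (((hasDerivAt_id z).const_sub 2).fun_pow 3)
  refine (h1.fun_mul h2).congr_deriv ?_
  push_cast
  ring

lemma hsQ {z : ℝ} (hz : z ∈ Set.Ioo (1:ℝ) 2) :
    HasDerivAt sQ ((-4*(2-z)^2*(14-z)) / (2 * sQ z)) z :=
  (hP z).sqrt (ne_of_gt (Ppos hz))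

lemma hNf {z : ℝ} (hz : z ∈ Set.Ioo (1:ℝ) 2) : HasDerivAt Nf (N1 z) z := by
  have h := ((hsQ hz).const_mul (1/24)).sub_const (1/2)
  have h2 : HasDerivAt (fun w : ℝ => (1/24) * sQ w - 1/2 + w/2 - w^2/24)
      ((1/24) * ((-4*(2-z)^2*(14-z)) / (2 * sQ z)) + 1/2 - z/12) z := by
    have ha : HasDerivAt (fun w : ℝ => w/2) (1/2) z := by
      simpa using (hasDerivAt_id z).div_const 2
    have hb : HasDerivAt (fun w : ℝ => w^2/24) (z/12) z := by
      have := ((hasDerivAt_pow 2 z).div_const 24)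
      refine this.congr_deriv ?_
      push_cast; ring
    exact ((h.add ha).sub hb)
  exact h2

lemma hFq {z : ℝ} (hz : z ∈ Set.Ioo (1:ℝ) 2) : HasDerivAt Fq (F1 z) z := by
  have hz0 : z ≠ 0 := by have := hz.1; intro h; linarith [h ▸ this]
  have := (hNf hz).fun_div (hasDerivAt_id z) hz0
  have heq : Fq = fun w => Nf w / w := by
    funext w; simp [Fq, Nf, sQ]
  rw [heq]
  simpa [F1] using this

lemma hP1 (z : ℝ) : HasDerivAt (fun w : ℝ => -4*(2-w)^2*(14-w)) (12*(2-z)*(10-z)) z := by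
  have h1 : HasDerivAt (fun w:ℝ => -4*(2-w)^2) ((-4) * ((2:ℝ) * (2-z)^1 * (-1))) z := by
    have := (((hasDerivAt_id z).const_sub 2).fun_pow 2).const_mul (-4 : ℝ)
    exact this.congr_deriv (by norm_num)
  have h2 : HasDerivAt (fun w:ℝ => (14-w)) (-1) z := by
    simpa using (hasDerivAt_id z).const_sub 14
  refine (h1.fun_mul h2).congr_deriv ?_
  ring

lemma hN1 {z : ℝ} (hz : z ∈ Set.Ioo (1:ℝ) 2) : HasDerivAt N1 (N2 z) z := by
  have hs0 : 2 * sQ z ≠ 0 := by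
    have : 0 < sQ z := Real.sqrt_pos.mpr (Ppos hz)
    positivity
  have hq : HasDerivAt (fun w => (-4*(2-w)^2*(14-w)) / (2 * sQ w))
      (((12*(2-z)*(10-z)) * (2 * sQ z)
        - (-4*(2-z)^2*(14-z)) * (2 * ((-4*(2-z)^2*(14-z)) / (2 * sQ z)))) / (2 * sQ z)^2) z :=
    (hP1 z).div ((hsQ hz).const_mul 2) hs0
  exact ((hq.const_mul (1/24)).add_const (1/2)).sub ((hasDerivAt_id z).div_const 12)

lemma hF1 {z : ℝ} (hz : z ∈ Set.Ioo (1:ℝ) 2) : HasDerivAt F1 (F2 z) z := by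
  have hz0 : z ≠ 0 := by have := hz.1; intro h; linarith [h ▸ this]
  have hz2 : z^2 ≠ 0 := pow_ne_zero _ hz0
  have hu : HasDerivAt (fun w => N1 w * w - Nf w) (N2 z * z + N1 z - N1 z) z := by
    have := ((hN1 hz).fun_mul (hasDerivAt_id z)).fun_sub (hNf hz)
    simpa using this
  have hv : HasDerivAt (fun w : ℝ => w^2) (2*z) z := by
    simpa using hasDerivAt_pow 2 z
  have := hu.fun_div hv hz2
  have heq : F1 = fun w => (N1 w * w - Nf w) / w^2 := rfl
  rw [heq]
  exact this

lemma dd {z : ℝ} (hz : z ∈ Set.Ioo (1:ℝ) 2) : deriv (deriv Fq) z = F2 z := by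
  have hev : deriv Fq =ᶠ[nhds z] F1 := by
    filter_upwards [isOpen_Ioo.mem_nhds hz] with x hx
    exact (hFq hx).deriv
  rw [hev.deriv_eq]
  exact (hF1 hz).deriv

lemma key {z : ℝ} (hz : z ∈ Set.Ioo (1:ℝ) 2) :
    (z^3 * F2 z) / ((1/2) * (2-z) ^ (-(1/2) : ℝ)) = G z := by
  obtain ⟨h1, h2⟩ := hz
  have h2z : (0:ℝ) < 2 - z := by linarith
  have h18 : (0:ℝ) < 18 - z := by linarith
  have hz0 : z ≠ 0 := ne_of_gt (by linarith)
  set r := Real.sqrt (2-z) with hrdef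
  set t := Real.sqrt (18-z) with htdef
  have hr : 0 < r := Real.sqrt_pos.mpr h2z
  have ht : 0 < t := Real.sqrt_pos.mpr h18
  have hr2 : r^2 = 2 - z := Real.sq_sqrt h2z.le
  have ht2 : t^2 = 18 - z := Real.sq_sqrt h18.le
  have hr3 : Real.sqrt ((2-z)^3) = (2-z) * r := by
    rw [show (2-z)^3 = (2-z)^2*(2-z) by ring, Real.sqrt_mul (sq_nonneg _), Real.sqrt_sq h2z.le]
  have hs3 : sQ z = r^3 * t := by
    rw [show sQ z = Real.sqrt ((18-z)*(2-z)^3) from rfl, Real.sqrt_mul h18.le, hr3, ← hr2]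
    ring
  have hrpow : (2-z) ^ (-(1/2) : ℝ) = r⁻¹ := by
    rw [Real.rpow_neg h2z.le, ← Real.sqrt_eq_rpow]
  rw [hrpow]
  simp only [F2, N2, N1, Nf, G, hs3, ← htdef, ← hrdef]
  rw [show (18:ℝ)-z = t^2 from ht2.symm, show (2:ℝ)-z = r^2 from hr2.symm]
  field_simp
  ring_nf

lemma Gtendsto : Tendsto G (nhdsWithin 2 (Set.Iio 2)) (nhds 1) := by
  have hc : ContinuousAt G 2 := by
    have h4 : Real.sqrt (18 - (2:ℝ)) = 4 := by
      rw [show (18:ℝ) - 2 = 16 by norm_num]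
      rw [show (16:ℝ) = 4^2 by norm_num, Real.sqrt_sq (by norm_num)]
    apply ContinuousAt.sub
    · apply ContinuousAt.add
      apply ContinuousAt.add
      · apply ContinuousAt.div
        · fun_prop
        · fun_prop
        · rw [h4]; norm_num
      · apply ContinuousAt.div
        · fun_prop
        · fun_prop
        · rw [h4]; norm_num
      · fun_prop
    · fun_prop
  have hG2 : G 2 = 1 := by
    simp only [G]
    rw [show Real.sqrt (18 - (2:ℝ)) = 4 by
      rw [show (18:ℝ) - 2 = 16 by norm_num, show (16:ℝ) = 4^2 by norm_num,
        Real.sqrt_sq (by norm_num)]]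
    norm_num
  rw [← hG2]
  exact hc.continuousWithinAt

/-- For `M(z) = (1/24)√((18-z)(2-z)^3) - 1/2 + z/2 - z²/24`, the double-marked
generating function `z³ (M(z)/z)''` is asymptotically `(1/2)(2-z)^{-1/2}` as `z → 2⁻`. -/
theorem stmt17 :
    Tendsto (fun z : ℝ =>
      (z^3 * deriv (deriv (fun w : ℝ =>
        ((1/24) * Real.sqrt ((18-w)*(2-w)^3) - 1/2 + w/2 - w^2/24) / w)) z)
      / ((1/2) * (2-z) ^ (-(1/2) : ℝ)))
      (nhdsWithin 2 (Set.Iio 2)) (nhds 1) := by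
  have hmem : ∀ᶠ z in nhdsWithin 2 (Set.Iio 2), z ∈ Set.Ioo (1:ℝ) 2 := by
    filter_upwards [eventually_mem_nhdsWithin,
      eventually_nhdsWithin_of_eventually_nhds
        (eventually_gt_nhds (by norm_num : (1:ℝ) < 2))] with z hz hz1
    exact ⟨hz1, hz⟩
  have heq : (fun z : ℝ =>
      (z^3 * deriv (deriv (fun w : ℝ =>
        ((1/24) * Real.sqrt ((18-w)*(2-w)^3) - 1/2 + w/2 - w^2/24) / w)) z)
      / ((1/2) * (2-z) ^ (-(1/2) : ℝ))) =ᶠ[nhdsWithin 2 (Set.Iio 2)] G := by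
    filter_upwards [hmem] with z hz
    have : (fun w : ℝ =>
        ((1/24) * Real.sqrt ((18-w)*(2-w)^3) - 1/2 + w/2 - w^2/24) / w) = Fq := rfl
    rw [this, dd hz, key hz]
  exact Gtendsto.congr' heq.symm
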